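/- Let n ≥ 2, m = n(n−1)/2, and let B ∈ ℝ^{m×n} be the signed vertex-edge incidence matrix of the complete graph on n vertices. For a weight vector w ∈ ℝ^m with nonnegative entries such that the graph with edge weights w is connected, define L(w) = Bᵀ diag(w) B and R(w) = B L(w)⁺ Bᵀ. Then for every coordinate i ∈ {1,…,m}, the function ε ↦ R(w + ε e_i) has right derivative at ε = 0 equal to −R_i R_iᵀ, where R_i denotes the i-th column of R(w). -/

import Mathlib

open Matrix BigOperators Polynomial Filter Topology

/-- The four Penrose conditions characterizing the Moore–Penrose pseudoinverse. -/
def IsMoorePenrose {m k : Type*} [Fintype m] [Fintype k] (M : Matrix m k ℝ)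
    (P : Matrix k m ℝ) : Prop :=
  M * P * M = M ∧ P * M * P = P ∧ (M * P)ᵀ = M * P ∧ (P * M)ᵀ = P * M

/- The Moore–Penrose pseudoinverse `M⁺`: it always exists and is unique, so this
choice-based definition picks out exactly the Moore–Penrose pseudoinverse. -/
open Classical in
noncomputable def pinv {m k : Type*} [Fintype m] [Fintype k] (M : Matrix m k ℝ) :
    Matrix k m ℝ :=
  if h : ∃ P, IsMoorePenrose M P then h.choose else 0

/-- Index type for the unordered pairs `{u,v}`, `u < v`, of vertices of the complete graph
on `n` vertices; there are `n(n-1)/2` of them. -/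
abbrev PairIdx (n : ℕ) := {p : Fin n × Fin n // p.1 < p.2}

/-- The signed vertex-edge incidence matrix `B` of the complete graph on `n` vertices:
the row for the pair `{u,v}` (with `u < v`) is `χ_{u,v} = e_u - e_v`. -/
def incB (n : ℕ) : Matrix (PairIdx n) (Fin n) ℝ :=
  Matrix.of fun p i => (if i = p.1.1 then 1 else 0) - (if i = p.1.2 then 1 else 0)

/-- The entrywise absolute value `|B|` of the incidence matrix `B`. -/
def absB (n : ℕ) : Matrix (PairIdx n) (Fin n) ℝ := (incB n).map fun x => |x|

/-- `L(w) = Bᵀ diag(w) B`, the Laplacian of the weighted graph with edge weights `w`. -/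
noncomputable def Lw {n : ℕ} (w : PairIdx n → ℝ) : Matrix (Fin n) (Fin n) ℝ :=
  (incB n)ᵀ * Matrix.diagonal w * incB n

/-- `R(w) = B L(w)⁺ Bᵀ`, whose diagonal entries are the pairwise effective resistances. -/
noncomputable def Rw {n : ℕ} (w : PairIdx n → ℝ) : Matrix (PairIdx n) (PairIdx n) ℝ :=
  incB n * pinv (Lw w) * (incB n)ᵀ

/-!
Let `J` be the averaging projection onto the constant vectors. Connectivity makes `L(w) + J`
invertible, and then `L(w)⁺ = (L(w) + J)⁻¹ - J`. Raising `w_i` by `ε` adds the rank-one term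
`ε b bᵀ` to `L(w)`, where `b = χ_i` lies in the range of `L(w)`; a Sherman–Morrison identity for
the pseudoinverse gives the exact formula `R(w + ε e_i) = R(w) - ε / (1 + ε R_ii) • R_i R_iᵀ`
for `ε ≥ 0` (with `R_ii ≥ 0`), and the right derivative is read off from it.
-/

theorem IsMoorePenrose.pinv_eq {m k : Type*} [Fintype m] [Fintype k] {M : Matrix m k ℝ}
    {P : Matrix k m ℝ} (h : IsMoorePenrose M P) : pinv M = P := by
  have hex : ∃ P, IsMoorePenrose M P := ⟨P, h⟩
  rw [pinv, dif_pos hex]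
  obtain ⟨q1, q2, q3, q4⟩ := hex.choose_spec
  obtain ⟨p1, p2, p3, p4⟩ := h
  set Q := hex.choose
  have hMQ : M * Q = M * P := calc
    M * Q = (M * P) * (M * Q) := by nth_rw 1 [← p1]; rw [Matrix.mul_assoc]
    _ = (M * P)ᵀ * (M * Q)ᵀ := by rw [p3, q3]
    _ = (M * Q * M * P)ᵀ := by simp only [Matrix.transpose_mul, Matrix.mul_assoc]
    _ = M * P := by rw [q1, p3]
  have hQM : Q * M = P * M := calc
    Q * M = (Q * M) * (P * M) := by nth_rw 1 [← p1]; simp only [Matrix.mul_assoc]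
    _ = (Q * M)ᵀ * (P * M)ᵀ := by rw [p4, q4]
    _ = (P * (M * Q * M))ᵀ := by simp only [Matrix.transpose_mul, Matrix.mul_assoc]
    _ = P * M := by rw [q1, p4]
  calc Q = Q * M * Q := q2.symm
    _ = P * (M * P) := by rw [hQM, Matrix.mul_assoc, hMQ]
    _ = P := by rw [← Matrix.mul_assoc, p2]

section MoorePenrose

variable {N : Type*} [Fintype N] {L Q J : Matrix N N ℝ} {b : N → ℝ}

/-- Sherman–Morrison for the pseudoinverse; `hb` says that `b` lies in the range of `L`. -/
theorem IsMoorePenrose.add_smul_vecMulVec (h : IsMoorePenrose L Q) (hL : Lᵀ = L)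
    (hQ : Qᵀ = Q) (hb : L *ᵥ (Q *ᵥ b) = b) {ε : ℝ} (hε : 1 + ε * (b ⬝ᵥ (Q *ᵥ b)) ≠ 0) :
    IsMoorePenrose (L + ε • vecMulVec b b)
      (Q - (ε / (1 + ε * (b ⬝ᵥ (Q *ᵥ b)))) • vecMulVec (Q *ᵥ b) (Q *ᵥ b)) := by
  obtain ⟨hLQL, hQLQ, hLQ, hQL⟩ := h
  set γ := ε / (1 + ε * (b ⬝ᵥ (Q *ᵥ b))) with hγdef
  have hγ : ε - γ - ε * γ * (b ⬝ᵥ (Q *ᵥ b)) = 0 := by rw [hγdef]; field_simp; ring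
  have hbQ : b ᵥ* Q = Q *ᵥ b := by rw [← vecMul_transpose, hQ]
  have hMP : (L + ε • vecMulVec b b) * (Q - γ • vecMulVec (Q *ᵥ b) (Q *ᵥ b)) = L * Q := calc
    _ = L * Q + ε • (vecMulVec b b * Q) - γ • (L * vecMulVec (Q *ᵥ b) (Q *ᵥ b))
          - (ε * γ) • (vecMulVec b b * vecMulVec (Q *ᵥ b) (Q *ᵥ b)) := by
      rw [Matrix.add_mul, Matrix.mul_sub, Matrix.mul_sub, Matrix.smul_mul, Matrix.smul_mul,
        Matrix.mul_smul, Matrix.mul_smul, smul_smul]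
      abel
    _ = L * Q + (ε - γ - ε * γ * (b ⬝ᵥ (Q *ᵥ b))) • vecMulVec b (Q *ᵥ b) := by
      rw [vecMulVec_mul, hbQ, mul_vecMulVec, hb, vecMulVec_mul_vecMulVec, vecMulVec_smul]
      module
    _ = L * Q := by rw [hγ, zero_smul, add_zero]
  have hPM : (Q - γ • vecMulVec (Q *ᵥ b) (Q *ᵥ b)) * (L + ε • vecMulVec b b) = Q * L := by
    simpa only [Matrix.transpose_mul, Matrix.transpose_add, Matrix.transpose_sub,
      Matrix.transpose_smul, transpose_vecMulVec, hL, hQ] using congrArg Matrix.transpose hMP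
  refine ⟨?_, ?_, by rw [hMP, hLQ], by rw [hPM, hQL]⟩
  · rw [hMP, Matrix.mul_add, hLQL, Matrix.mul_smul, mul_vecMulVec, ← Matrix.mulVec_mulVec, hb]
  · rw [hPM, Matrix.mul_sub, hQLQ, Matrix.mul_smul, mul_vecMulVec, ← Matrix.mulVec_mulVec, hb]

variable [DecidableEq N]

theorem isMoorePenrose_inv_add_sub (hL : Lᵀ = L) (hJ : Jᵀ = J) (hJJ : J * J = J)
    (hJL : J * L = 0) (hdet : IsUnit (L + J).det) :
    IsMoorePenrose L ((L + J)⁻¹ - J) ∧ L * ((L + J)⁻¹ - J) = 1 - J := by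
  have hLJ : L * J = 0 := by
    simpa [Matrix.transpose_mul, hL, hJ] using congrArg Matrix.transpose hJL
  have hJA : J * (L + J)⁻¹ = J := by
    have h : J * (L + J) = J := by rw [Matrix.mul_add, hJL, hJJ, zero_add]
    calc J * (L + J)⁻¹ = J * (L + J) * (L + J)⁻¹ := by rw [h]
      _ = J := by rw [Matrix.mul_assoc, Matrix.mul_nonsing_inv _ hdet, Matrix.mul_one]
  have hAJ : (L + J)⁻¹ * J = J := by
    simpa [Matrix.transpose_mul, Matrix.transpose_nonsing_inv, hL, hJ] using
      congrArg Matrix.transpose hJA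
  have hLQ : L * ((L + J)⁻¹ - J) = 1 - J := calc
    _ = (L + J) * (L + J)⁻¹ - J * (L + J)⁻¹ - L * J := by
      rw [Matrix.mul_sub, Matrix.add_mul]; abel
    _ = 1 - J := by rw [Matrix.mul_nonsing_inv _ hdet, hJA, hLJ, sub_zero]
  have hQL : ((L + J)⁻¹ - J) * L = 1 - J := calc
    _ = (L + J)⁻¹ * (L + J) - (L + J)⁻¹ * J - J * L := by
      rw [Matrix.sub_mul, Matrix.mul_add]; abel
    _ = 1 - J := by rw [Matrix.nonsing_inv_mul _ hdet, hAJ, hJL, sub_zero]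
  refine ⟨⟨?_, ?_, ?_, ?_⟩, hLQ⟩
  · rw [hLQ, Matrix.sub_mul, hJL, Matrix.one_mul, sub_zero]
  · rw [hQL, Matrix.sub_mul, Matrix.one_mul, Matrix.mul_sub, hJA, hJJ, sub_self, sub_zero]
  · rw [hLQ, Matrix.transpose_sub, Matrix.transpose_one, hJ]
  · rw [hQL, Matrix.transpose_sub, Matrix.transpose_one, hJ]

end MoorePenrose

section Laplacian

variable {n : ℕ}

noncomputable def meanProj (n : ℕ) : Matrix (Fin n) (Fin n) ℝ := of fun _ _ => (n : ℝ)⁻¹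

theorem meanProj_transpose : (meanProj n)ᵀ = meanProj n := rfl

theorem meanProj_mulVec (x : Fin n → ℝ) : meanProj n *ᵥ x = fun _ => (n : ℝ)⁻¹ * ∑ k, x k := by
  ext
  simp [meanProj, mulVec, dotProduct, Finset.mul_sum]

theorem meanProj_mul_self (hn : n ≠ 0) : meanProj n * meanProj n = meanProj n := by
  ext
  simp [meanProj, mul_apply]
  field_simp

theorem sum_incB (e : PairIdx n) : ∑ k, incB n e k = 0 := by
  simp [incB, Finset.sum_sub_distrib]

theorem incB_mulVec_apply (x : Fin n → ℝ) (e : PairIdx n) :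
    (incB n *ᵥ x) e = x e.1.1 - x e.1.2 := by
  simp [incB, mulVec, dotProduct, sub_mul, Finset.sum_sub_distrib]

theorem meanProj_mul_Lw (w : PairIdx n → ℝ) : meanProj n * Lw w = 0 := by
  have h : meanProj n * (incB n)ᵀ = 0 := by
    ext
    simp [meanProj, mul_apply, ← Finset.mul_sum, sum_incB]
  rw [Lw, ← Matrix.mul_assoc, ← Matrix.mul_assoc, h, Matrix.zero_mul, Matrix.zero_mul]

theorem Lw_transpose (w : PairIdx n → ℝ) : (Lw w)ᵀ = Lw w := by
  rw [Lw, transpose_mul, transpose_mul, transpose_transpose, diagonal_transpose, Matrix.mul_assoc]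

theorem posSemidef_Lw {w : PairIdx n → ℝ} (hw : ∀ i, 0 ≤ w i) : (Lw w).PosSemidef := by
  simpa [Lw, conjTranspose_eq_transpose_of_trivial] using
    (posSemidef_diagonal_iff.mpr hw).conjTranspose_mul_mul_same (incB n)

theorem dotProduct_Lw_mulVec (w : PairIdx n → ℝ) (x : Fin n → ℝ) :
    x ⬝ᵥ (Lw w *ᵥ x) = ∑ e, w e * (x e.1.1 - x e.1.2) ^ 2 := by
  rw [Lw, ← mulVec_mulVec, ← mulVec_mulVec, dotProduct_mulVec, vecMul_transpose]
  simp only [dotProduct, mulVec_diagonal, incB_mulVec_apply]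
  exact Finset.sum_congr rfl fun e _ => by ring

theorem Lw_add_smul_single (w : PairIdx n → ℝ) (i : PairIdx n) (ε : ℝ) :
    Lw (w + ε • Pi.single i 1) = Lw w + ε • vecMulVec (incB n i) (incB n i) := by
  have h : (incB n)ᵀ * diagonal (Pi.single i (1 : ℝ)) * incB n
      = vecMulVec (incB n i) (incB n i) := by
    ext u v
    simp [mul_apply, diagonal_apply, Pi.single_apply, vecMulVec_apply]
  have hdiag : diagonal (w + ε • Pi.single i 1) = diagonal w + ε • diagonal (Pi.single i 1) := by
    rw [← diagonal_smul, diagonal_add]; rfl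
  rw [Lw, Lw, hdiag, Matrix.mul_add, Matrix.add_mul, Matrix.mul_smul, Matrix.smul_mul, h]

end Laplacian

theorem SimpleGraph.Reachable.eq_of_forall_adj {V α : Type*} {G : SimpleGraph V} {f : V → α}
    (hf : ∀ u v, G.Adj u v → f u = f v) {u v : V} (h : G.Reachable u v) : f u = f v := by
  obtain ⟨p⟩ := h
  induction p with
  | nil => rfl
  | cons hadj _ ih => exact (hf _ _ hadj).trans ih

section Connected

variable {n : ℕ}

def supportGraph (w : PairIdx n → ℝ) : SimpleGraph (Fin n) :=
  SimpleGraph.fromRel fun u v =>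
    ∃ i : PairIdx n, 0 < w i ∧ (s(u, v) : Sym2 (Fin n)) = s(i.1.1, i.1.2)

theorem dotProduct_meanProj_mulVec (x : Fin n → ℝ) :
    x ⬝ᵥ (meanProj n *ᵥ x) = (n : ℝ)⁻¹ * (∑ k, x k) ^ 2 := by
  simp only [meanProj_mulVec, dotProduct, ← Finset.sum_mul]
  ring

theorem eq_of_supportGraph_adj {w : PairIdx n → ℝ} (hw : ∀ i, 0 ≤ w i) {x : Fin n → ℝ}
    (hx : x ⬝ᵥ (Lw w *ᵥ x) = 0) {u v : Fin n} (huv : (supportGraph w).Adj u v) : x u = x v := by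
  have hedge : ∀ e : PairIdx n, 0 < w e → x e.1.1 = x e.1.2 := by
    intro e he
    rw [dotProduct_Lw_mulVec, Finset.sum_eq_zero_iff_of_nonneg fun e _ =>
      mul_nonneg (hw e) (sq_nonneg _)] at hx
    have := (mul_eq_zero.mp (hx e (Finset.mem_univ e))).resolve_left he.ne'
    exact sub_eq_zero.mp (pow_eq_zero_iff two_ne_zero |>.mp this)
  rw [supportGraph, SimpleGraph.fromRel_adj] at huv
  obtain ⟨e, he, hs⟩ := huv.2.elim id fun ⟨e, he, hs⟩ => ⟨e, he, Sym2.eq_swap.trans hs⟩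
  rcases Sym2.eq_iff.mp hs with ⟨rfl, rfl⟩ | ⟨rfl, rfl⟩
  exacts [hedge e he, (hedge e he).symm]

theorem eq_zero_of_Lw_add_meanProj_mulVec_eq_zero {w : PairIdx n → ℝ} (hw : ∀ i, 0 ≤ w i)
    (hconn : (supportGraph w).Connected) {x : Fin n → ℝ} (hx : (Lw w + meanProj n) *ᵥ x = 0) :
    x = 0 := by
  have hL : 0 ≤ x ⬝ᵥ (Lw w *ᵥ x) := by
    simpa using (posSemidef_Lw hw).dotProduct_mulVec_nonneg x
  have hJ : 0 ≤ (n : ℝ)⁻¹ * (∑ k, x k) ^ 2 := by positivity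
  have hsplit : x ⬝ᵥ (Lw w *ᵥ x) + (n : ℝ)⁻¹ * (∑ k, x k) ^ 2 = 0 := by
    rw [← dotProduct_meanProj_mulVec, ← dotProduct_add, ← add_mulVec, hx, dotProduct_zero]
  obtain ⟨hLx, hJx⟩ := (add_eq_zero_iff_of_nonneg hL hJ).mp hsplit
  obtain ⟨u₀⟩ := hconn.nonempty
  have hconst : ∀ k, x k = x u₀ := fun k =>
    (hconn.preconnected k u₀).eq_of_forall_adj fun _ _ => eq_of_supportGraph_adj hw hLx
  have hn : (n : ℝ) ≠ 0 := Nat.cast_ne_zero.mpr (Fin.pos_iff_nonempty.mpr ⟨u₀⟩).ne'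
  have hsum : ∑ k, x k = 0 := by simpa [hn] using hJx
  simp only [hconst, Finset.sum_const, Finset.card_univ, Fintype.card_fin, nsmul_eq_mul,
    mul_eq_zero, hn, false_or] at hsum
  ext k
  rw [hconst, hsum, Pi.zero_apply]

theorem isUnit_det_Lw_add_meanProj {w : PairIdx n → ℝ} (hw : ∀ i, 0 ≤ w i)
    (hconn : (supportGraph w).Connected) : IsUnit (Lw w + meanProj n).det := by
  rw [isUnit_iff_ne_zero, Ne, ← exists_mulVec_eq_zero_iff]
  rintro ⟨x, hx0, hx⟩
  exact hx0 (eq_zero_of_Lw_add_meanProj_mulVec_eq_zero hw hconn hx)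

end Connected

section Resistance

variable {n : ℕ} {w : PairIdx n → ℝ}

theorem isMoorePenrose_Lw (hw : ∀ i, 0 ≤ w i) (hconn : (supportGraph w).Connected) :
    IsMoorePenrose (Lw w) ((Lw w + meanProj n)⁻¹ - meanProj n) ∧
      Lw w * ((Lw w + meanProj n)⁻¹ - meanProj n) = 1 - meanProj n := by
  obtain ⟨u₀⟩ := hconn.nonempty
  exact isMoorePenrose_inv_add_sub (Lw_transpose w) meanProj_transpose
    (meanProj_mul_self (Fin.pos_iff_nonempty.mpr ⟨u₀⟩).ne') (meanProj_mul_Lw w)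
    (isUnit_det_Lw_add_meanProj hw hconn)

theorem Rw_apply_of_pinv_eq {Q : Matrix (Fin n) (Fin n) ℝ} (hQ : pinv (Lw w) = Q)
    (j i : PairIdx n) :
    Rw w j i = (incB n *ᵥ (Q *ᵥ incB n i)) j := by
  rw [Rw, hQ, Matrix.mul_assoc]
  rfl

theorem Rw_add_smul_single (hw : ∀ i, 0 ≤ w i) (hconn : (supportGraph w).Connected)
    (i : PairIdx n) {ε : ℝ} (hε : 0 ≤ ε) :
    Rw (w + ε • Pi.single i 1) = Rw w -
      (ε / (1 + ε * Rw w i i)) • vecMulVec (fun j => Rw w j i) (fun j => Rw w j i) := by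
  obtain ⟨hMP, hLQ⟩ := isMoorePenrose_Lw hw hconn
  set Q := (Lw w + meanProj n)⁻¹ - meanProj n
  set b := incB n i
  have hQ : Qᵀ = Q := by
    rw [transpose_sub, transpose_nonsing_inv, transpose_add, Lw_transpose, meanProj_transpose]
  have hb : Lw w *ᵥ (Q *ᵥ b) = b := by
    rw [mulVec_mulVec, hLQ, sub_mulVec, one_mulVec, meanProj_mulVec, sum_incB, mul_zero]
    exact sub_zero b
  have hcol : (fun j => Rw w j i) = incB n *ᵥ (Q *ᵥ b) :=
    funext fun j => Rw_apply_of_pinv_eq hMP.pinv_eq j i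
  have hc : b ⬝ᵥ (Q *ᵥ b) = Rw w i i := (Rw_apply_of_pinv_eq hMP.pinv_eq i i).symm
  have hc₀ : 0 ≤ Rw w i i := calc
    0 ≤ (Q *ᵥ b) ⬝ᵥ (Lw w *ᵥ (Q *ᵥ b)) := by
      simpa using (posSemidef_Lw hw).dotProduct_mulVec_nonneg (Q *ᵥ b)
    _ = Rw w i i := by rw [hb, dotProduct_comm, hc]
  have hupd := hMP.add_smul_vecMulVec (Lw_transpose w) hQ hb (ε := ε) (by rw [hc]; positivity)
  rw [← Lw_add_smul_single, hc] at hupd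
  rw [hcol, Rw, hupd.pinv_eq, Rw, hMP.pinv_eq, Matrix.mul_sub, Matrix.sub_mul, Matrix.mul_smul,
    Matrix.smul_mul, mul_vecMulVec, vecMulVec_mul, vecMul_transpose]

end Resistance

theorem stmt12_general {n : ℕ} (w : PairIdx n → ℝ) (hw : ∀ i, 0 ≤ w i)
    (hconn : (SimpleGraph.fromRel fun u v => ∃ i : PairIdx n,
        0 < w i ∧ (s(u, v) : Sym2 (Fin n)) = s(i.1.1, i.1.2)).Connected)
    (i : PairIdx n) :
    Filter.Tendsto
      (fun ε : ℝ => (1 / ε) • (Rw (w + ε • (Pi.single i 1 : PairIdx n → ℝ)) - Rw w))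
      (nhdsWithin 0 (Set.Ioi 0))
      (nhds (-(Matrix.vecMulVec (fun j => Rw w j i) (fun j => Rw w j i)))) := by
  have hquot : ∀ ε ∈ Set.Ioi (0 : ℝ),
      -(1 + ε * Rw w i i)⁻¹ • vecMulVec (fun j => Rw w j i) (fun j => Rw w j i) =
      (1 / ε) • (Rw (w + ε • (Pi.single i 1 : PairIdx n → ℝ)) - Rw w) := by
    intro ε (hε : 0 < ε)
    rw [Rw_add_smul_single hw hconn i hε.le, sub_sub_cancel_left, smul_neg, smul_smul,
      ← neg_smul]
    field_simp
  have hlim : Tendsto (fun ε : ℝ => -(1 + ε * Rw w i i)⁻¹) (𝓝[>] 0) (𝓝 (-1)) := by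
    refine tendsto_nhdsWithin_of_tendsto_nhds ?_
    have : ContinuousAt (fun ε : ℝ => -(1 + ε * Rw w i i)⁻¹) 0 :=
      ((continuousAt_const.add (continuousAt_id.mul continuousAt_const)).inv₀ (by simp)).neg
    simpa using this.tendsto
  simpa using (hlim.smul_const (vecMulVec (fun j => Rw w j i) (fun j => Rw w j i))).congr'
    (eventually_nhdsWithin_of_forall hquot)

/-- For a nonnegative weight vector `w` on the edges of the complete
graph whose positive-weight edges form a connected graph, and any edge coordinate `i`,
the map `ε ↦ R(w + ε e_i)` has right derivative `-R_i R_iᵀ` at `ε = 0`, where `R_i` is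
the `i`-th column of `R(w) = B L(w)⁺ Bᵀ`. -/
theorem stmt12 {n : ℕ} (hn : 2 ≤ n) (w : PairIdx n → ℝ) (hw : ∀ i, 0 ≤ w i)
    (hconn : (SimpleGraph.fromRel fun u v => ∃ i : PairIdx n,
        0 < w i ∧ (s(u, v) : Sym2 (Fin n)) = s(i.1.1, i.1.2)).Connected)
    (i : PairIdx n) :
    Filter.Tendsto
      (fun ε : ℝ => (1 / ε) • (Rw (w + ε • (Pi.single i 1 : PairIdx n → ℝ)) - Rw w))
      (nhdsWithin 0 (Set.Ioi 0))
      (nhds (-(Matrix.vecMulVec (fun j => Rw w j i) (fun j => Rw w j i)))) :=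
  stmt12_general w hw hconn i
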